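/- arXiv:2408.09854 — 3 statements merged into one kernel-verified Lean document; each statement's English description precedes it below -/
import Mathlib

section
/- Let A₀, …, A_k be constant n×n real matrices and let ξ(λ) = Σ_{i=0}^k λ^i A_i. If det ξ(λ) is the zero polynomial, then the solution space of the homogeneous system Σ_{i=0}^k A_i x^{(i)}(t) = 0 on an interval is infinite-dimensional. -/
open Matrix Polynomial

/-- The monoid hom `t ↦ exp (c * t)` from `Multiplicative ℝ` to `ℝ`. -/
noncomputable def expHom (c : ℝ) : Multiplicative ℝ →* ℝ where
  toFun := fun t => Real.exp (c * Multiplicative.toAdd t)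
  map_one' := by simp
  map_mul' := fun a b => by
    simp [toAdd_mul, mul_add, Real.exp_add]

lemma expHom_li : LinearIndependent ℝ (fun m : ℕ => ⇑(expHom (m : ℝ))) := by
  apply (linearIndependent_monoidHom (Multiplicative ℝ) ℝ).comp
  intro a b hab
  have h := DFunLike.congr_fun hab (Multiplicative.ofAdd 1)
  simp only [expHom, MonoidHom.coe_mk, OneHom.coe_mk, toAdd_ofAdd, mul_one] at h
  exact Nat.cast_injective (Real.exp_injective h)

lemma exp_comb_eq_zero {s : Finset ℕ} {g : ℕ → ℝ}
    (h : ∀ t : ℝ, ∑ m ∈ s, g m * Real.exp ((m : ℝ) * t) = 0) : ∀ m ∈ s, g m = 0 := by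
  refine linearIndependent_iff'.mp expHom_li s g ?_
  funext t
  simpa [expHom] using h (Multiplicative.toAdd t)

lemma iteratedDeriv_exp_smul (c : ℝ) {E : Type*} [NormedAddCommGroup E] [NormedSpace ℝ E]
    (v : E) (i : ℕ) :
    iteratedDeriv i (fun t : ℝ => Real.exp (c * t) • v)
      = fun t => (c ^ i * Real.exp (c * t)) • v := by
  induction i with
  | zero => simp
  | succ i ih =>
    rw [iteratedDeriv_succ, ih]
    funext t
    have h1 : HasDerivAt (fun t : ℝ => c ^ i * Real.exp (c * t))
        (c ^ i * (Real.exp (c * t) * c)) t := by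
      exact (((Real.hasDerivAt_exp (c * t)).comp t
        ((hasDerivAt_id t).const_mul c)).const_mul (c ^ i)).congr_deriv (by ring)
    have h2 := (h1.smul_const v).deriv
    rw [h2]
    ring_nf

/-- If the determinant of the matrix polynomial ξ(λ) = Σ λ^i A_i is identically zero,
then the space of C^k solutions of Σ A_i x^{(i)} = 0 is infinite-dimensional: there is
an infinite linearly independent family of solutions. -/
theorem stmt_3 {n k : ℕ} (A : Fin (k + 1) → Matrix (Fin n) (Fin n) ℝ)
    (hdet : (∑ i : Fin (k + 1), (A i).map fun a => Polynomial.C a * Polynomial.X ^ (i : ℕ)).det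
        = 0) :
    ∃ S : ℕ → (ℝ → (Fin n → ℝ)),
      (∀ m, ContDiff ℝ (k : ℕ∞) (S m)) ∧
      (∀ m, ∀ t : ℝ, ∑ i : Fin (k + 1), (A i) *ᵥ (iteratedDeriv (i : ℕ) (S m) t) = 0) ∧
      LinearIndependent ℝ S := by
  -- For each natural number `m`, the matrix `ξ(m)` is singular.
  have hsing : ∀ m : ℕ, ∃ v : Fin n → ℝ, v ≠ 0 ∧
      (∑ i : Fin (k + 1), ((m : ℝ) ^ (i : ℕ)) • A i) *ᵥ v = 0 := by
    intro m
    have hdet' : (∑ i : Fin (k + 1), ((m : ℝ) ^ (i : ℕ)) • A i).det = 0 := by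
      have : (∑ i : Fin (k + 1), ((m : ℝ) ^ (i : ℕ)) • A i)
          = (∑ i : Fin (k + 1), (A i).map fun a => Polynomial.C a * Polynomial.X ^ (i : ℕ)).map
            (Polynomial.eval (m : ℝ)) := by
        ext p q
        simp only [Matrix.map_apply, Matrix.sum_apply, Matrix.smul_apply, smul_eq_mul,
          Polynomial.eval_finset_sum, Polynomial.eval_mul, Polynomial.eval_C,
          Polynomial.eval_pow, Polynomial.eval_X, mul_comm]
      rw [this, ← Polynomial.coe_evalRingHom,
        ← RingHom.mapMatrix_apply (Polynomial.evalRingHom (m : ℝ)),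
        ← RingHom.map_det, hdet]
      simp
    obtain ⟨v, hv, hvz⟩ := Matrix.exists_mulVec_eq_zero_iff.mpr hdet'
    exact ⟨v, hv, hvz⟩
  choose v hv hvz using hsing
  refine ⟨fun m => fun t => Real.exp ((m : ℝ) * t) • v m, ?_, ?_, ?_⟩
  · intro m
    exact ((Real.contDiff_exp.comp ((contDiff_const).mul contDiff_id)).smul
      contDiff_const).of_le le_top
  · intro m t
    have : ∀ i : Fin (k + 1),
        (A i) *ᵥ (iteratedDeriv (i : ℕ) (fun t => Real.exp ((m : ℝ) * t) • v m) t)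
        = Real.exp ((m : ℝ) * t) • ((((m : ℝ) ^ (i : ℕ)) • A i) *ᵥ v m) := by
      intro i
      rw [iteratedDeriv_exp_smul]
      rw [Matrix.mulVec_smul, Matrix.smul_mulVec, smul_smul, mul_comm]
    simp_rw [this, ← Finset.smul_sum]
    have hms : ∑ x : Fin (k + 1), (((m : ℝ) ^ (x : ℕ)) • A x) *ᵥ v m
        = (∑ x : Fin (k + 1), ((m : ℝ) ^ (x : ℕ)) • A x) *ᵥ v m :=
      (map_sum (Matrix.mulVec.addMonoidHomLeft (v m))
        (fun i : Fin (k + 1) => ((m : ℝ) ^ (i : ℕ)) • A i) Finset.univ).symm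
    rw [hms, hvz m, smul_zero]
  · rw [linearIndependent_iff']
    intro s g hsum m hm
    obtain ⟨j, hj⟩ := Function.ne_iff.mp (hv m)
    have hpt : ∀ t : ℝ, ∑ m' ∈ s, (g m' * v m' j) * Real.exp ((m' : ℝ) * t) = 0 := by
      intro t
      have := congrFun (congrFun hsum t) j
      simpa [Finset.sum_apply, mul_comm, mul_assoc, mul_left_comm] using this
    have := exp_comb_eq_zero hpt m hm
    exact (mul_eq_zero.mp this).resolve_right (by simpa using hj)
end

section
/- Let A₀, …, A_k be constant n×n matrices with det(Σ_{i=0}^k λ^i A_i) ≡ a₀ a nonzero constant. Then for every smooth f, the system Σ A_i x^{(i)} = f has the unique solution x(t) = (1/a₀)·𝐀[d/dt] f(t), where 𝐀[λ] is the adjugate of the matrix polynomial Σ λ^i A_i; in particular x is a linear combination of finitely many derivatives of f. -/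
open Matrix Polynomial

/-- Apply a polynomial differential operator `p(d/dt)` to a scalar function. -/
noncomputable def polyD (p : Polynomial ℝ) (g : ℝ → ℝ) : ℝ → ℝ :=
  fun t => p.sum fun l a => a * iteratedDeriv l g t

section helpers

variable {F : Type*} [NormedAddCommGroup F] [NormedSpace ℝ F] [CompleteSpace F]

lemma cd_deriv {f : ℝ → F} (hf : ContDiff ℝ (⊤ : ℕ∞) f) : ContDiff ℝ (⊤ : ℕ∞) (deriv f) :=
  (contDiff_infty_iff_deriv.1 hf).2

lemma cd_iteratedDeriv {f : ℝ → F} (hf : ContDiff ℝ (⊤ : ℕ∞) f) (m : ℕ) :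
    ContDiff ℝ (⊤ : ℕ∞) (iteratedDeriv m f) := by
  induction m generalizing f with
  | zero => simpa [iteratedDeriv_zero] using hf
  | succ m ih => rw [iteratedDeriv_succ']; exact ih (cd_deriv hf)

lemma iterD_add {f g : ℝ → F} (hf : ContDiff ℝ (⊤ : ℕ∞) f) (hg : ContDiff ℝ (⊤ : ℕ∞) g) (m : ℕ) :
    iteratedDeriv m (fun t => f t + g t) = fun t => iteratedDeriv m f t + iteratedDeriv m g t := by
  funext t
  simp only [← iteratedDerivWithin_univ]
  have := iteratedDerivWithin_add (Set.mem_univ t) uniqueDiffOn_univ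
    ((hf.of_le (by exact_mod_cast le_top)).contDiffWithinAt (n := (m : WithTop ℕ∞)))
    ((hg.of_le (by exact_mod_cast le_top)).contDiffWithinAt (n := (m : WithTop ℕ∞)))
  simpa [Pi.add_def] using this

lemma iterD_sum {ι : Type*} (s : Finset ι) (G : ι → ℝ → F)
    (hG : ∀ i ∈ s, ContDiff ℝ (⊤ : ℕ∞) (G i)) (m : ℕ) :
    iteratedDeriv m (fun t => ∑ i ∈ s, G i t) = fun t => ∑ i ∈ s, iteratedDeriv m (G i) t := by
  classical
  induction s using Finset.induction with
  | empty =>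
    simp only [Finset.sum_empty]
    have : ∀ m : ℕ, iteratedDeriv m (fun _ : ℝ => (0 : F)) = fun _ => 0 := by
      intro m
      induction m with
      | zero => simp [iteratedDeriv_zero]
      | succ m ihm => rw [iteratedDeriv_succ', deriv_const']; exact ihm
    exact this m
  | insert a s' hne ih =>
    have hGa : ContDiff ℝ (⊤ : ℕ∞) (G a) := hG a (Finset.mem_insert_self a s')
    have hGs : ∀ i ∈ s', ContDiff ℝ (⊤ : ℕ∞) (G i) := fun i hi => hG i (Finset.mem_insert_of_mem hi)
    have hsum : ContDiff ℝ (⊤ : ℕ∞) (fun t => ∑ i ∈ s', G i t) := ContDiff.sum fun i hi => hGs i hi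
    simp only [Finset.sum_insert hne]
    rw [iterD_add hGa hsum, ih hGs]

lemma iterD_const_mul {g : ℝ → ℝ} (hg : ContDiff ℝ (⊤ : ℕ∞) g) (c : ℝ) (m : ℕ) :
    iteratedDeriv m (fun t => c * g t) = fun t => c * iteratedDeriv m g t := by
  funext t
  simp only [← iteratedDerivWithin_univ]
  exact iteratedDerivWithin_const_mul (Set.mem_univ t) uniqueDiffOn_univ c
    ((hg.of_le (by exact_mod_cast le_top)).contDiffWithinAt (n := (m : WithTop ℕ∞)))

lemma iterD_iterD (g : ℝ → F) (m l : ℕ) :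
    iteratedDeriv m (iteratedDeriv l g) = iteratedDeriv (m + l) g := by
  funext t
  simp [iteratedDeriv_eq_iterate, Function.iterate_add_apply]

end helpers

lemma polyD_apply (p : Polynomial ℝ) (g : ℝ → ℝ) (t : ℝ) :
    polyD p g t = ∑ l ∈ p.support, p.coeff l * iteratedDeriv l g t := rfl

lemma polyD_smooth {g : ℝ → ℝ} (hg : ContDiff ℝ (⊤ : ℕ∞) g) (p : Polynomial ℝ) :
    ContDiff ℝ (⊤ : ℕ∞) (polyD p g) :=
  ContDiff.sum fun l _ => contDiff_const.mul (cd_iteratedDeriv hg l)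

lemma polyD_C (a : ℝ) (g : ℝ → ℝ) : polyD (C a) g = fun t => a * g t := by
  funext t
  simp [polyD, Polynomial.sum_C_index]

lemma polyD_monomial (m : ℕ) (a : ℝ) (g : ℝ → ℝ) :
    polyD (monomial m a) g = fun t => a * iteratedDeriv m g t := by
  funext t
  simp [polyD, Polynomial.sum_monomial_index]

lemma polyD_add (p q : Polynomial ℝ) (g : ℝ → ℝ) :
    polyD (p + q) g = fun t => polyD p g t + polyD q g t := by
  funext t
  simp [polyD, Polynomial.sum_add_index, add_mul]

lemma polyD_zero (g : ℝ → ℝ) : polyD 0 g = 0 := by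
  funext t; simp [polyD]

lemma polyD_finset_sum {ι : Type*} (s : Finset ι) (P : ι → Polynomial ℝ) (g : ℝ → ℝ) :
    polyD (∑ i ∈ s, P i) g = fun t => ∑ i ∈ s, polyD (P i) g t := by
  classical
  induction s using Finset.induction with
  | empty => simp only [Finset.sum_empty, polyD_zero]; rfl
  | insert a s' hne ih =>
    simp only [Finset.sum_insert hne]
    rw [polyD_add, ih]

lemma polyD_g_sum {ι : Type*} (p : Polynomial ℝ) (s : Finset ι) (G : ι → ℝ → ℝ)
    (hG : ∀ i ∈ s, ContDiff ℝ (⊤ : ℕ∞) (G i)) :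
    polyD p (fun t => ∑ i ∈ s, G i t) = fun t => ∑ i ∈ s, polyD p (G i) t := by
  funext t
  simp only [polyD_apply]
  rw [Finset.sum_comm]
  refine Finset.sum_congr rfl fun l _ => ?_
  rw [iterD_sum s G hG l, Finset.mul_sum]

lemma polyD_g_const_mul (p : Polynomial ℝ) {g : ℝ → ℝ} (hg : ContDiff ℝ (⊤ : ℕ∞) g) (c : ℝ) :
    polyD p (fun t => c * g t) = fun t => c * polyD p g t := by
  funext t
  simp only [polyD_apply, Finset.mul_sum]
  refine Finset.sum_congr rfl fun l _ => ?_
  rw [iterD_const_mul hg c l]; ring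

lemma polyD_mul (p q : Polynomial ℝ) {g : ℝ → ℝ} (hg : ContDiff ℝ (⊤ : ℕ∞) g) :
    polyD (p * q) g = polyD p (polyD q g) := by
  induction p using Polynomial.induction_on' with
  | add p r hp hr =>
    rw [add_mul, polyD_add, hp, hr, polyD_add]
  | monomial m a =>
    rw [polyD_monomial]
    have h1 : iteratedDeriv m (polyD q g)
        = fun t => ∑ l ∈ q.support, q.coeff l * iteratedDeriv (m + l) g t := by
      have : polyD q g = fun t => ∑ l ∈ q.support, (fun t => q.coeff l * iteratedDeriv l g t) t :=
        rfl
      rw [this, iterD_sum q.support _ (fun l _ => contDiff_const.mul (cd_iteratedDeriv hg l)) m]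
      funext t
      refine Finset.sum_congr rfl fun l _ => ?_
      rw [iterD_const_mul (cd_iteratedDeriv hg l) (q.coeff l) m, iterD_iterD]
    have h2 : monomial m a * q = ∑ l ∈ q.support, monomial (m + l) (a * q.coeff l) := by
      conv_lhs => rw [q.as_sum_support, Finset.mul_sum]
      exact Finset.sum_congr rfl fun l _ => monomial_mul_monomial m l a (q.coeff l)
    rw [h2, polyD_finset_sum]
    funext t
    rw [h1]
    simp only [polyD_monomial, Finset.mul_sum]
    exact Finset.sum_congr rfl fun l _ => by ring

/-- Apply a matrix differential operator to a vector-valued function. -/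
noncomputable def Mop {n : ℕ} (M : Matrix (Fin n) (Fin n) (Polynomial ℝ))
    (x : ℝ → Fin n → ℝ) : ℝ → Fin n → ℝ :=
  fun t i => ∑ j, polyD (M i j) (fun t => x t j) t

lemma Mop_smooth {n : ℕ} (M : Matrix (Fin n) (Fin n) (Polynomial ℝ))
    {x : ℝ → Fin n → ℝ} (hx : ContDiff ℝ (⊤ : ℕ∞) x) : ContDiff ℝ (⊤ : ℕ∞) (Mop M x) :=
  contDiff_pi.2 fun i => ContDiff.sum fun j _ => polyD_smooth (contDiff_pi.1 hx j) (M i j)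

lemma Mop_mul {n : ℕ} (M N : Matrix (Fin n) (Fin n) (Polynomial ℝ))
    {x : ℝ → Fin n → ℝ} (hx : ContDiff ℝ (⊤ : ℕ∞) x) :
    Mop (M * N) x = Mop M (Mop N x) := by
  funext t i
  have step1 : Mop (M * N) x t i
      = ∑ j, ∑ p, polyD (M i p) (polyD (N p j) fun t => x t j) t := by
    refine Finset.sum_congr rfl fun j _ => ?_
    rw [Matrix.mul_apply, polyD_finset_sum]
    exact Finset.sum_congr rfl fun p _ => by
      rw [polyD_mul (M i p) (N p j) (contDiff_pi.1 hx j)]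
  rw [step1, Finset.sum_comm]
  refine Finset.sum_congr rfl fun p _ => ?_
  have : (fun t => Mop N x t p) = fun t => ∑ j, polyD (N p j) (fun t => x t j) t := rfl
  show _ = polyD (M i p) (fun t => Mop N x t p) t
  rw [this, polyD_g_sum _ _ _ (fun j _ => polyD_smooth (contDiff_pi.1 hx j) (N p j))]

lemma Mop_C_smul_one {n : ℕ} (a : ℝ) (x : ℝ → Fin n → ℝ) :
    Mop ((C a : Polynomial ℝ) • (1 : Matrix (Fin n) (Fin n) (Polynomial ℝ))) x
      = fun t i => a * x t i := by
  funext t i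
  show (∑ j, polyD ((C a • (1 : Matrix (Fin n) (Fin n) (Polynomial ℝ))) i j) (fun t => x t j) t)
    = a * x t i
  rw [Finset.sum_eq_single i]
  · simp only [Matrix.smul_apply, Matrix.one_apply_eq, smul_eq_mul, mul_one]
    rw [polyD_C]
  · intro j _ hj
    simp only [Matrix.smul_apply, Matrix.one_apply_ne' hj, smul_eq_mul, mul_zero]
    rw [polyD_zero]; rfl
  · intro h; exact absurd (Finset.mem_univ i) h

lemma iterD_pi {n : ℕ} {x : ℝ → Fin n → ℝ} (hx : ContDiff ℝ (⊤ : ℕ∞) x) (m : ℕ) (j : Fin n) :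
    (fun t => iteratedDeriv m x t j) = iteratedDeriv m (fun t => x t j) := by
  induction m with
  | zero => simp [iteratedDeriv_zero]
  | succ m ih =>
    funext t
    rw [iteratedDeriv_succ, iteratedDeriv_succ, ← ih]
    have hdm : ContDiff ℝ (⊤ : ℕ∞) (iteratedDeriv m x) := cd_iteratedDeriv hx m
    rw [deriv_pi (fun j => ((contDiff_pi.1 hdm j).differentiable (by simp)).differentiableAt)]

lemma Mop_eq_sys {n k : ℕ} (A : Fin (k + 1) → Matrix (Fin n) (Fin n) ℝ)
    (M : Matrix (Fin n) (Fin n) (Polynomial ℝ))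
    (hM : M = ∑ i : Fin (k + 1), (A i).map fun a => Polynomial.C a * Polynomial.X ^ (i : ℕ))
    {x : ℝ → Fin n → ℝ} (hx : ContDiff ℝ (⊤ : ℕ∞) x) (t : ℝ) :
    Mop M x t = ∑ i : Fin (k + 1), (A i) *ᵥ (iteratedDeriv (i : ℕ) x t) := by
  funext i0
  have lhs : Mop M x t i0
      = ∑ j, ∑ m : Fin (k + 1), (A m) i0 j * iteratedDeriv (m : ℕ) (fun t => x t j) t := by
    refine Finset.sum_congr rfl fun j _ => ?_
    have hMij : M i0 j = ∑ m : Fin (k + 1), C ((A m) i0 j) * X ^ (m : ℕ) := by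
      rw [hM]; simp [Matrix.sum_apply, Matrix.map_apply]
    rw [hMij, polyD_finset_sum]
    refine Finset.sum_congr rfl fun m _ => ?_
    rw [C_mul_X_pow_eq_monomial, polyD_monomial]
  rw [lhs, Finset.sum_comm]
  simp only [Finset.sum_apply, Matrix.mulVec, dotProduct]
  refine Finset.sum_congr rfl fun m _ => Finset.sum_congr rfl fun j _ => ?_
  rw [← iterD_pi hx (m : ℕ) j]

lemma adj_deg {n k : ℕ} (A : Fin (k + 1) → Matrix (Fin n) (Fin n) ℝ)
    (M : Matrix (Fin n) (Fin n) (Polynomial ℝ))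
    (hM : M = ∑ i : Fin (k + 1), (A i).map fun a => Polynomial.C a * Polynomial.X ^ (i : ℕ))
    (i j : Fin n) : (M.adjugate i j).natDegree ≤ n * k := by
  have hMd : ∀ p q, (M p q).natDegree ≤ k := by
    intro p q
    rw [hM]
    simp only [Matrix.sum_apply, Matrix.map_apply]
    refine natDegree_sum_le_of_forall_le _ _ fun m _ => ?_
    exact le_trans (natDegree_C_mul_X_pow_le _ _) (Fin.is_le m)
  rw [adjugate_apply, det_apply']
  refine natDegree_sum_le_of_forall_le _ _ fun σ _ => ?_
  refine le_trans (natDegree_mul_le) ?_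
  rw [natDegree_intCast, zero_add]
  refine le_trans (natDegree_prod_le _ _) ?_
  have : ∀ p : Fin n, ((M.updateRow j (Pi.single i 1)) (σ p) p).natDegree ≤ k := by
    intro p
    rw [Matrix.updateRow_apply]
    split
    · rcases eq_or_ne p i with h | h
      · subst h; simp
      · simp [Pi.single_apply, h]
    · exact hMd _ _
  calc ∑ p : Fin n, ((M.updateRow j (Pi.single i 1)) (σ p) p).natDegree
      ≤ ∑ _p : Fin n, k := Finset.sum_le_sum fun p _ => this p
    _ = n * k := by simp [Finset.sum_const, mul_comm]

/-- If det(Σ λ^i A_i) ≡ a₀ is a nonzero constant, then for every smooth f the system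
Σ A_i x^{(i)} = f has the unique smooth solution x = (1/a₀) · 𝐀[d/dt] f, where 𝐀[λ]
is the adjugate of the matrix polynomial; in particular x is a linear combination of
finitely many derivatives of f. -/
theorem stmt_4 {n k : ℕ} (A : Fin (k + 1) → Matrix (Fin n) (Fin n) ℝ)
    (M : Matrix (Fin n) (Fin n) (Polynomial ℝ))
    (hM : M = ∑ i : Fin (k + 1), (A i).map fun a => Polynomial.C a * Polynomial.X ^ (i : ℕ))
    (a₀ : ℝ) (ha₀ : a₀ ≠ 0) (hdet : M.det = Polynomial.C a₀)
    (f : ℝ → Fin n → ℝ) (hf : ContDiff ℝ (⊤ : ℕ∞) f) :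
    let x : ℝ → Fin n → ℝ := fun t i => a₀⁻¹ *
      ∑ j : Fin n, ∑ l ∈ Finset.range (n * k + 1),
        (M.adjugate i j).coeff l * iteratedDeriv l f t j
    (ContDiff ℝ (⊤ : ℕ∞) x ∧ ∀ t : ℝ, ∑ i : Fin (k + 1), (A i) *ᵥ (iteratedDeriv (i : ℕ) x t) = f t)
    ∧ ∀ y : ℝ → Fin n → ℝ, ContDiff ℝ (⊤ : ℕ∞) y →
        (∀ t : ℝ, ∑ i : Fin (k + 1), (A i) *ᵥ (iteratedDeriv (i : ℕ) y t) = f t) → y = x := by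
  intro x
  -- x equals a₀⁻¹ • Mop (adjugate M) f
  have key1 : x = fun t i => a₀⁻¹ * Mop M.adjugate f t i := by
    funext t i
    show a₀⁻¹ * _ = a₀⁻¹ * _
    congr 1
    refine Finset.sum_congr rfl fun j _ => ?_
    show ∑ l ∈ Finset.range (n * k + 1), (M.adjugate i j).coeff l * iteratedDeriv l f t j
      = polyD (M.adjugate i j) (fun t => f t j) t
    rw [polyD, Polynomial.sum_over_range' (M.adjugate i j) (fun l => by simp) (n * k + 1)
      (Nat.lt_succ_of_le (adj_deg A M hM i j))]
    refine Finset.sum_congr rfl fun l _ => ?_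
    congr 1
    exact congrFun (iterD_pi hf l j) t
  have hz : ContDiff ℝ (⊤ : ℕ∞) (Mop M.adjugate f) := Mop_smooth _ hf
  have hxs : ContDiff ℝ (⊤ : ℕ∞) x := by
    rw [key1]
    exact contDiff_pi.2 fun i => contDiff_const.mul (contDiff_pi.1 hz i)
  refine ⟨⟨hxs, fun t => ?_⟩, fun y hy hyeq => ?_⟩
  · -- existence
    rw [← Mop_eq_sys A M hM hxs t]
    have h1 : Mop M x = fun t i => a₀⁻¹ * Mop M (Mop M.adjugate f) t i := by
      rw [key1]
      funext t i
      show ∑ j, polyD (M i j) (fun t => a₀⁻¹ * Mop M.adjugate f t j) t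
        = a₀⁻¹ * ∑ j, polyD (M i j) (fun t => Mop M.adjugate f t j) t
      rw [Finset.mul_sum]
      exact Finset.sum_congr rfl fun j _ => by
        rw [polyD_g_const_mul (M i j) (contDiff_pi.1 hz j) a₀⁻¹]
    have h2 : Mop M (Mop M.adjugate f) = fun t i => a₀ * f t i := by
      rw [← Mop_mul M M.adjugate hf, mul_adjugate, hdet, Mop_C_smul_one]
    rw [h1, h2]
    funext i
    simp [inv_mul_cancel_left₀ ha₀]
  · -- uniqueness
    have hMy : Mop M y = f := funext fun t => by rw [Mop_eq_sys A M hM hy t]; exact hyeq t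
    have h3 : Mop (M.adjugate * M) y = Mop M.adjugate f := by
      rw [Mop_mul M.adjugate M hy, hMy]
    rw [adjugate_mul, hdet, Mop_C_smul_one] at h3
    funext t i
    have := congrFun (congrFun h3 t) i
    rw [key1]
    show y t i = a₀⁻¹ * Mop M.adjugate f t i
    rw [← this, inv_mul_cancel_left₀ ha₀]
end

section
/- With the same entries p_{ij} as in the DC-DC model, det P(ν) = p₁₁p₂₂ − p₁₂p₂₁ > 0 holds if 1/(rC) ≥ R_C R_L/(rL), i.e. if L ≥ C R_C R_L; in particular, under L ≥ C R_C R_L and all parameters positive, both Routh–Hurwitz conditions hold and the linearized system is asymptotically stable. -/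
open Matrix

open Polynomial in
lemma charpoly_fin_two' (M : Matrix (Fin 2) (Fin 2) ℂ) :
    M.charpoly = X ^ 2 - C M.trace * X + C M.det := by
  rw [Matrix.charpoly, Matrix.det_fin_two, charmatrix_apply_eq, charmatrix_apply_eq,
    charmatrix_apply_ne _ _ _ (by decide), charmatrix_apply_ne _ _ _ (by decide),
    Matrix.trace_fin_two, Matrix.det_fin_two]
  simp only [map_add, map_sub, _root_.map_mul]
  ring


/-- Under L ≥ C·R_C·R_L and positive parameters, the DC-DC matrix P(ν) satisfies
det P > 0 and trace P < 0 (both Routh–Hurwitz conditions), hence the linearized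
system x' = Px is asymptotically stable: all eigenvalues have negative real part. -/
theorem stmt_13 (RL L C RC Rload r : ℝ) (Nf : ℕ)
    (hRL : 0 < RL) (hL : 0 < L) (hNf : 0 < Nf) (hC : 0 < C) (hRC : 0 < RC)
    (hRload : 0 < Rload) (hr : r = 1 + RC / Rload) (hLC : L ≥ C * RC * RL)
    (P : Matrix (Fin 2) (Fin 2) ℝ)
    (hP : P = !![-(RL / L), (Nf : ℝ) / L;
                 -(1 / (r * C)) + RC * RL / (r * L),
                 -(1 / (r * C * Rload) + RC * (Nf : ℝ) / (r * L))]) :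
    P.trace < 0 ∧ 0 < P.det ∧
      ∀ μ : ℂ, ((P.map (Complex.ofReal ·)).charpoly).IsRoot μ → μ.re < 0 := by
  have hr0 : 0 < r := by rw [hr]; positivity
  have hNf' : (0:ℝ) < (Nf:ℝ) := by exact_mod_cast hNf
  have ht : P.trace < 0 := by
    rw [hP, Matrix.trace_fin_two_of]
    have h1 : 0 < RL / L := by positivity
    have h2 : 0 < 1 / (r * C * Rload) + RC * (Nf : ℝ) / (r * L) := by positivity
    linarith
  have hd : P.det = RL / (L * (r * C * Rload)) + (Nf : ℝ) / (L * (r * C)) := by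
    rw [hP, Matrix.det_fin_two_of]
    field_simp
    ring
  have hd0 : 0 < P.det := by rw [hd]; positivity
  refine ⟨ht, hd0, ?_⟩
  intro μ hμ
  have htrm : (P.map (Complex.ofReal ·)).trace = ((P.trace : ℝ) : ℂ) := by
    rw [Matrix.trace_fin_two, Matrix.trace_fin_two]
    simp [Matrix.map_apply]
  have hdetm : (P.map (Complex.ofReal ·)).det = ((P.det : ℝ) : ℂ) := by
    rw [Matrix.det_fin_two, Matrix.det_fin_two]
    simp [Matrix.map_apply]
  rw [Polynomial.IsRoot, charpoly_fin_two', htrm, hdetm] at hμ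
  simp only [Polynomial.eval_add, Polynomial.eval_sub, Polynomial.eval_mul,
    Polynomial.eval_pow, Polynomial.eval_X, Polynomial.eval_C] at hμ
  set t := P.trace
  set d := P.det
  rw [Complex.ext_iff] at hμ
  simp only [pow_two, Complex.add_re, Complex.sub_re, Complex.mul_re, Complex.mul_im,
    Complex.add_im, Complex.sub_im, Complex.ofReal_re, Complex.ofReal_im,
    Complex.zero_re, Complex.zero_im] at hμ
  obtain ⟨h1, h2⟩ := hμ
  by_contra hx
  push_neg at hx
  have hy : μ.im * (2 * μ.re - t) = 0 := by nlinarith [h2]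
  rcases mul_eq_zero.1 hy with hy0 | hxe
  · nlinarith [sq_nonneg μ.re]
  · nlinarith
end
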